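/- arXiv:1101.2533 — 6 statements merged into one kernel-verified Lean document; each statement's English description precedes it below -/
import Mathlib

section
/- Let N be a positive integer, let P_N = {2i − N − 1 : i = 1, …, N} ⊆ ℤ be the N-PAM constellation, and let A_{N²} = {a + b·i : a, b ∈ P_N} ⊆ ℂ be the square QAM constellation of size N². Then the set {N·x₁ + x₂ : x₁, x₂ ∈ A_{N²}} equals A_{N⁴}, the square QAM constellation of size N⁴. (Paper's Lemma 1: for symbols x₁, x₂ taking values in M-QAM with √M = N², the symbol √M·x₁ + x₂ takes values in M²-QAM.) -/
/-- The `n`-PAM constellation `{2i - n - 1 : i = 1, …, n} ⊆ ℤ`. -/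
def PAM (n : ℕ) : Set ℤ :=
  {m | ∃ i : ℕ, 1 ≤ i ∧ i ≤ n ∧ m = 2 * (i : ℤ) - n - 1}

/-- The square QAM constellation of size `n²`: `{a + b·i : a, b ∈ PAM n} ⊆ ℂ`. -/
def QAM (n : ℕ) : Set ℂ :=
  {z | ∃ a b : ℤ, a ∈ PAM n ∧ b ∈ PAM n ∧ z = (a : ℂ) + (b : ℂ) * Complex.I}

lemma pam_sq (N : ℕ) (hN : 0 < N) (m : ℤ) :
    m ∈ PAM (N ^ 2) ↔ ∃ a b : ℤ, a ∈ PAM N ∧ b ∈ PAM N ∧ m = N * a + b := by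
  constructor
  · rintro ⟨k, hk1, hk2, rfl⟩
    obtain ⟨k', rfl⟩ : ∃ k', k = k' + 1 := ⟨k - 1, by omega⟩
    obtain ⟨q, r, hr, hd⟩ : ∃ q r, r < N ∧ N * q + r = k' :=
      ⟨k' / N, k' % N, Nat.mod_lt _ hN, Nat.div_add_mod k' N⟩
    have hNN : N ^ 2 = N * N := sq N
    have hq : q < N := by nlinarith
    refine ⟨2 * ((q + 1 : ℕ) : ℤ) - N - 1, 2 * ((r + 1 : ℕ) : ℤ) - N - 1,
      ⟨q + 1, by omega, by omega, rfl⟩, ⟨r + 1, by omega, by omega, rfl⟩, ?_⟩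
    have hd' : (N : ℤ) * q + r = (k' : ℤ) := by exact_mod_cast hd
    push_cast
    linear_combination (-2 : ℤ) * hd'
  · rintro ⟨a, b, ⟨i, hi1, hi2, rfl⟩, ⟨j, hj1, hj2, rfl⟩, rfl⟩
    obtain ⟨i', rfl⟩ : ∃ i', i = i' + 1 := ⟨i - 1, by omega⟩
    obtain ⟨j', rfl⟩ : ∃ j', j = j' + 1 := ⟨j - 1, by omega⟩
    refine ⟨N * i' + (j' + 1), by omega, by nlinarith, ?_⟩
    push_cast
    ring

/-- Paper's Lemma 1: for `x₁, x₂` in the QAM constellation of size `N²`,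
`N·x₁ + x₂` ranges exactly over the QAM constellation of size `N⁴`. -/
theorem stmt0 (N : ℕ) (hN : 0 < N) :
    {z : ℂ | ∃ x₁ x₂ : ℂ, x₁ ∈ QAM N ∧ x₂ ∈ QAM N ∧ z = (N : ℂ) * x₁ + x₂}
      = QAM (N ^ 2) := by
  ext z
  simp only [Set.mem_setOf_eq]
  constructor
  · rintro ⟨x₁, x₂, ⟨a₁, b₁, ha₁, hb₁, rfl⟩, ⟨a₂, b₂, ha₂, hb₂, rfl⟩, rfl⟩
    refine ⟨N * a₁ + a₂, N * b₁ + b₂, (pam_sq N hN _).2 ⟨a₁, a₂, ha₁, ha₂, rfl⟩,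
      (pam_sq N hN _).2 ⟨b₁, b₂, hb₁, hb₂, rfl⟩, ?_⟩
    push_cast; ring
  · rintro ⟨a, b, ha, hb, rfl⟩
    obtain ⟨a₁, a₂, ha₁, ha₂, rfl⟩ := (pam_sq N hN a).1 ha
    obtain ⟨b₁, b₂, hb₁, hb₂, rfl⟩ := (pam_sq N hN b).1 hb
    exact ⟨(a₁ : ℂ) + b₁ * Complex.I, (a₂ : ℂ) + b₂ * Complex.I,
      ⟨a₁, b₁, ha₁, hb₁, rfl⟩, ⟨a₂, b₂, ha₂, hb₂, rfl⟩, by push_cast; ring⟩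
end

section
/- Let N be a positive integer, let P_N = {2i − N − 1 : i = 1, …, N} ⊆ ℤ, let A_{N²} = {a + b·i : a, b ∈ P_N} ⊆ ℂ be the square QAM constellation of size N², and let F be a 2 × 2 matrix with real entries acting ℂ-linearly on ℂ². Let D_C = {x − x′ : x, x′ ∈ A_{N²}} and D_R = {p − p′ : p, p′ ∈ P_N}. Then min{ ‖F Δ‖² : Δ ∈ D_C × D_C, Δ ≠ 0 } = min{ ‖F Δ‖² : Δ ∈ D_R × D_R, Δ ≠ 0 }. (This is the paper's claim that for a real-valued precoder, the minimum received distance over the M-QAM constellation equals that over the √M-PAM constellation.) -/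
/-!
A real precoder acts separately on the real and imaginary parts of a complex difference
vector, so `‖F Δ‖² = ‖F (Re Δ)‖² + ‖F (Im Δ)‖²`. The QAM difference set is exactly the set of
complex numbers whose real and imaginary parts are PAM differences, so for a nonzero `Δ` one of
`Re Δ`, `Im Δ` is a nonzero PAM difference vector giving a value no larger than `‖F Δ‖²`.
Conversely, every real PAM difference vector is itself a QAM difference vector.
-/

open Finset

lemma sum_norm_sq_ofReal_mul_eq {m n : Type*} [Fintype m] [Fintype n]
    (F : Matrix m n ℝ) (Δ : n → ℂ) :
    ∑ i, ‖∑ j, (F i j : ℂ) * Δ j‖ ^ 2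
      = ∑ i, (∑ j, F i j * (Δ j).re) ^ 2 + ∑ i, (∑ j, F i j * (Δ j).im) ^ 2 := by
  rw [← sum_add_distrib]
  refine sum_congr rfl fun i _ => ?_
  simp only [Complex.sq_norm, Complex.normSq_apply, Complex.re_sum, Complex.im_sum,
    Complex.re_ofReal_mul, Complex.im_ofReal_mul]
  ring

def PAMDiff (n : ℕ) : Set ℝ :=
  {t | ∃ p p' : ℤ, p ∈ PAM n ∧ p' ∈ PAM n ∧ t = (p : ℝ) - (p' : ℝ)}

lemma exists_QAM_sub_iff (n : ℕ) (z : ℂ) :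
    (∃ x x' : ℂ, x ∈ QAM n ∧ x' ∈ QAM n ∧ z = x - x') ↔ z.re ∈ PAMDiff n ∧ z.im ∈ PAMDiff n := by
  constructor
  · rintro ⟨x, x', ⟨a, b, ha, hb, rfl⟩, ⟨a', b', ha', hb', rfl⟩, rfl⟩
    exact ⟨⟨a, a', ha, ha', by simp⟩, ⟨b, b', hb, hb', by simp⟩⟩
  · rintro ⟨⟨a, a', ha, ha', hre⟩, ⟨b, b', hb, hb', him⟩⟩
    refine ⟨_, _, ⟨a, b, ha, hb, rfl⟩, ⟨a', b', ha', hb', rfl⟩, Complex.ext ?_ ?_⟩ <;>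
      simp [hre, him]

lemma zero_mem_PAMDiff {n : ℕ} {t : ℝ} (ht : t ∈ PAMDiff n) : (0 : ℝ) ∈ PAMDiff n := by
  obtain ⟨p, -, hp, -, -⟩ := ht
  exact ⟨p, p, hp, hp, (sub_self _).symm⟩

theorem stmt4_general (N : ℕ) (F : Matrix (Fin 2) (Fin 2) ℝ) :
    sInf {r : ℝ | ∃ Δ : Fin 2 → ℂ,
        (∀ i, ∃ x x' : ℂ, x ∈ QAM N ∧ x' ∈ QAM N ∧ Δ i = x - x') ∧ Δ ≠ 0 ∧
        r = ∑ i, ‖∑ j, (F i j : ℂ) * Δ j‖ ^ 2}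
      = sInf {r : ℝ | ∃ Δ : Fin 2 → ℝ,
          (∀ i, ∃ p p' : ℤ, p ∈ PAM N ∧ p' ∈ PAM N ∧ Δ i = (p : ℝ) - (p' : ℝ)) ∧
          Δ ≠ 0 ∧ r = ∑ i, (∑ j, F i j * Δ j) ^ 2} := by
  simp only [exists_QAM_sub_iff]
  refine csInf_eq_csInf_of_forall_exists_le ?_ ?_
  · rintro _ ⟨Δ, hΔ, hne, rfl⟩
    have hre_or_im : (fun i => (Δ i).re) ≠ 0 ∨ (fun i => (Δ i).im) ≠ 0 := by
      by_contra! h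
      exact hne (funext fun i => Complex.ext (congrFun h.1 i) (congrFun h.2 i))
    rw [sum_norm_sq_ofReal_mul_eq]
    rcases hre_or_im with hre | him
    · exact ⟨_, ⟨_, fun i => (hΔ i).1, hre, rfl⟩, le_add_of_nonneg_right (by positivity)⟩
    · exact ⟨_, ⟨_, fun i => (hΔ i).2, him, rfl⟩, le_add_of_nonneg_left (by positivity)⟩
  · rintro _ ⟨Δ, hΔ, hne, rfl⟩
    refine ⟨_, ⟨fun i => (Δ i : ℂ), fun i => ⟨hΔ i, by simpa using zero_mem_PAMDiff (hΔ i)⟩,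
      fun h => hne (funext fun i => by simpa using congrFun h i), rfl⟩, ?_⟩
    rw [sum_norm_sq_ofReal_mul_eq]
    simp

/-- For a real-valued `2 × 2` precoder `F`, the minimum of `‖F Δ‖²` over nonzero
difference vectors of the `N²`-QAM constellation equals the minimum over nonzero
difference vectors of the `N`-PAM constellation. -/
theorem stmt4 (N : ℕ) (hN : 0 < N) (F : Matrix (Fin 2) (Fin 2) ℝ) :
    sInf {r : ℝ | ∃ Δ : Fin 2 → ℂ,
        (∀ i, ∃ x x' : ℂ, x ∈ QAM N ∧ x' ∈ QAM N ∧ Δ i = x - x') ∧ Δ ≠ 0 ∧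
        r = ∑ i, ‖∑ j, (F i j : ℂ) * Δ j‖ ^ 2}
      = sInf {r : ℝ | ∃ Δ : Fin 2 → ℝ,
          (∀ i, ∃ p p' : ℤ, p ∈ PAM N ∧ p' ∈ PAM N ∧ Δ i = (p : ℝ) - (p' : ℝ)) ∧
          Δ ≠ 0 ∧ r = ∑ i, (∑ j, F i j * Δ j) ^ 2} :=
  stmt4_general N F
end

section
/- Let γ, ψ ∈ (0, π/2), let θ and p₁, q₁, p₂, q₂ be real numbers, and define ε(p, q, θ, ψ) = cos²γ·cos²ψ·(p·cosθ − q·sinθ)² + sin²γ·sin²ψ·(q·cosθ + p·sinθ)². Let Den = (p₂q₂ − p₁q₁)·sin(2θ) + (q₂² − q₁²)·cos²θ + (p₂² − p₁²)·sin²θ. If Den ≠ 0, then ε(p₁, q₁, θ, ψ) = ε(p₂, q₂, θ, ψ) if and only if tan²γ · tan²ψ = 1 + (p₁² + q₁² − p₂² − q₂²)/Den. -/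
/-- `ε(p, q, θ, ψ) = cos²γ·cos²ψ·(p·cosθ − q·sinθ)² + sin²γ·sin²ψ·(q·cosθ + p·sinθ)²`. -/
noncomputable def eps (γ p q θ ψ : ℝ) : ℝ :=
  Real.cos γ ^ 2 * Real.cos ψ ^ 2 * (p * Real.cos θ - q * Real.sin θ) ^ 2 +
    Real.sin γ ^ 2 * Real.sin ψ ^ 2 * (q * Real.cos θ + p * Real.sin θ) ^ 2

/-- For `γ, ψ ∈ (0, π/2)` and `Den ≠ 0`, `ε(p₁,q₁,θ,ψ) = ε(p₂,q₂,θ,ψ)` iff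
`tan²γ·tan²ψ = 1 + (p₁² + q₁² − p₂² − q₂²)/Den`. -/
theorem stmt6 (γ ψ : ℝ) (hγ : γ ∈ Set.Ioo 0 (Real.pi / 2))
    (hψ : ψ ∈ Set.Ioo 0 (Real.pi / 2)) (θ p₁ q₁ p₂ q₂ Den : ℝ)
    (hDen : Den = (p₂ * q₂ - p₁ * q₁) * Real.sin (2 * θ) +
      (q₂ ^ 2 - q₁ ^ 2) * Real.cos θ ^ 2 + (p₂ ^ 2 - p₁ ^ 2) * Real.sin θ ^ 2)
    (hDen0 : Den ≠ 0) :
    eps γ p₁ q₁ θ ψ = eps γ p₂ q₂ θ ψ ↔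
      Real.tan γ ^ 2 * Real.tan ψ ^ 2 =
        1 + (p₁ ^ 2 + q₁ ^ 2 - p₂ ^ 2 - q₂ ^ 2) / Den := by
  have hcγ : Real.cos γ > 0 :=
    Real.cos_pos_of_mem_Ioo ⟨by linarith [Real.pi_pos, hγ.1], hγ.2⟩
  have hcψ : Real.cos ψ > 0 :=
    Real.cos_pos_of_mem_Ioo ⟨by linarith [Real.pi_pos, hψ.1], hψ.2⟩
  have hθ := Real.sin_sq_add_cos_sq θ
  set S : ℝ := p₁ ^ 2 + q₁ ^ 2 - p₂ ^ 2 - q₂ ^ 2 with hS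
  have key : Den = (q₂ * Real.cos θ + p₂ * Real.sin θ) ^ 2 -
      (q₁ * Real.cos θ + p₁ * Real.sin θ) ^ 2 := by
    rw [hDen, Real.sin_two_mul]; ring
  have keyA : (p₁ * Real.cos θ - q₁ * Real.sin θ) ^ 2 -
      (p₂ * Real.cos θ - q₂ * Real.sin θ) ^ 2 = S + Den := by
    rw [key, hS]; nlinarith [hθ]
  have lhs_iff : eps γ p₁ q₁ θ ψ = eps γ p₂ q₂ θ ψ ↔
      Real.cos γ ^ 2 * Real.cos ψ ^ 2 * (S + Den) =
        Real.sin γ ^ 2 * Real.sin ψ ^ 2 * Den := by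
    unfold eps
    constructor
    · intro h
      linear_combination h - Real.cos γ ^ 2 * Real.cos ψ ^ 2 * keyA -
        Real.sin γ ^ 2 * Real.sin ψ ^ 2 * key
    · intro h
      linear_combination h + Real.cos γ ^ 2 * Real.cos ψ ^ 2 * keyA +
        Real.sin γ ^ 2 * Real.sin ψ ^ 2 * key
  have hDivs : (1 : ℝ) + S / Den = (Den + S) / Den := by field_simp
  rw [lhs_iff, Real.tan_eq_sin_div_cos, Real.tan_eq_sin_div_cos, hDivs,
    div_pow, div_pow, div_mul_div_comm,
    div_eq_div_iff (by positivity) hDen0]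
  constructor <;> intro h <;> nlinarith [h]
end

section
/- Let t > −1 and k > 0 and c > 0 be real numbers, and let f : [0, ∞) → [0, ∞) be a measurable integrable function (a probability density, ∫_0^∞ f(α) dα = 1) such that f(α) = c·α^t + o(α^t) as α → 0⁺ (i.e., lim_{α→0⁺} f(α)/α^t = c). Define P_e(s) = ∫_0^∞ Q(√(k·α·s))·f(α) dα for s > 0. Then, as s → ∞, P_e(s) = (2^t·c·Γ(t + 3/2)/(√π·(t+1)))·(k·s)^{−(t+1)} + o(s^{−(t+1)}); equivalently, lim_{s→∞} s^{t+1}·P_e(s) = 2^t·c·Γ(t + 3/2) / ( √π·(t+1)·k^{t+1} ). (Paper's Theorem 1: the diversity gain of the scalar channel is t + 1.) -/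
/-- The Gaussian Q-function `Q(x) = ∫_x^∞ (1/√(2π))·e^{−s²/2} ds`. -/
noncomputable def Qfun (x : ℝ) : ℝ :=
  ∫ s in Set.Ioi x, (1 / Real.sqrt (2 * Real.pi)) * Real.exp (-s ^ 2 / 2)

/-! Writing `Q(√(aα)) = ∫_{x > √(aα)} φ` for the standard normal density `φ` and swapping the
integrals gives `P_e(s) = ∫_0^∞ φ(x) F(x²/(ks)) dx` with `F(b) = ∫_0^b f`. The behaviour of `f` at
`0⁺` gives `F(b) ~ c b^{t+1}/(t+1)` as `b → 0⁺`, and with `F ≤ ∫ f` this yields `F(b) ≤ C b^{t+1}`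
for all `b > 0`. So `(ks)^{t+1} F(x²/(ks)) → c x^{2t+2}/(t+1)` under the integrable majorant
`C φ(x) x^{2t+2}`, and dominated convergence reduces the limit to the Gaussian moment
`∫_0^∞ φ(x) x^{2t+2} dx = 2^t Γ(t+3/2)/√π`. -/

open MeasureTheory Set Filter Real ProbabilityTheory Topology

lemma Qfun_eq_setIntegral_gaussianPDFReal (x : ℝ) :
    Qfun x = ∫ y in Ioi x, gaussianPDFReal 0 1 y := by
  simp [Qfun, gaussianPDFReal]

lemma Qfun_nonneg (x : ℝ) : 0 ≤ Qfun x := by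
  rw [Qfun_eq_setIntegral_gaussianPDFReal]
  exact setIntegral_nonneg measurableSet_Ioi fun y _ => gaussianPDFReal_nonneg 0 1 y

lemma antitone_Qfun : Antitone Qfun := fun a b hab => by
  simp only [Qfun_eq_setIntegral_gaussianPDFReal]
  exact setIntegral_mono_set (integrable_gaussianPDFReal 0 1).integrableOn
    (.of_forall fun y => gaussianPDFReal_nonneg 0 1 y) (Ioi_subset_Ioi hab).eventuallyLE

lemma gaussianPDFReal_zero_one_apply (x : ℝ) :
    gaussianPDFReal 0 1 x = (√(2 * π))⁻¹ * exp (-(1 / 2) * x ^ 2) := by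
  simp only [gaussianPDFReal, NNReal.coe_one, mul_one, sub_zero]
  ring_nf

lemma integrableOn_gaussianPDFReal_mul_rpow {p : ℝ} (hp : -1 < p) :
    IntegrableOn (fun x => gaussianPDFReal 0 1 x * x ^ p) (Ioi 0) := by
  refine (((integrable_rpow_mul_exp_neg_mul_sq (by norm_num : (0 : ℝ) < 1 / 2) hp).const_mul
    (√(2 * π))⁻¹).integrableOn).congr_fun (fun x _ => ?_) measurableSet_Ioi
  simp only [gaussianPDFReal_zero_one_apply]
  ring

lemma setIntegral_gaussianPDFReal_mul_rpow {p : ℝ} (hp : -1 < p) :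
    ∫ x in Ioi 0, gaussianPDFReal 0 1 x * x ^ p = 2 ^ (p / 2) * Gamma ((p + 1) / 2) / (2 * √π) := by
  have hmoment := integral_rpow_mul_exp_neg_mul_rpow two_pos hp (by norm_num : (0 : ℝ) < 1 / 2)
  have hhalf : (1 / 2 : ℝ) ^ (-(p + 1) / 2) = 2 ^ (p / 2) * √2 := by
    rw [one_div, inv_rpow zero_le_two, ← rpow_neg zero_le_two, neg_div, neg_neg, add_div,
      rpow_add two_pos, sqrt_eq_rpow, one_div]
  calc ∫ x in Ioi 0, gaussianPDFReal 0 1 x * x ^ p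
      = (√(2 * π))⁻¹ * ∫ x in Ioi (0 : ℝ), x ^ p * exp (-(1 / 2) * x ^ (2 : ℝ)) := by
        rw [← integral_const_mul]
        refine setIntegral_congr_fun measurableSet_Ioi fun x _ => ?_
        simp only [gaussianPDFReal_zero_one_apply, rpow_two]
        ring
    _ = _ := by
        rw [hmoment, hhalf, sqrt_mul zero_le_two]
        have : 0 < √2 := by positivity
        have : 0 < √π := by positivity
        field_simp

lemma monotone_setIntegral_Ioo {f : ℝ → ℝ} (hnonneg : ∀ α, 0 ≤ f α)
    (hInt : IntegrableOn f (Ioi 0)) : Monotone fun b => ∫ α in Ioo 0 b, f α := fun _ _ hab =>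
  setIntegral_mono_set (hInt.mono_set Ioo_subset_Ioi_self) (.of_forall fun α => hnonneg α)
    (Ioo_subset_Ioo_right hab).eventuallyLE

lemma setIntegral_Qfun_sqrt_mul_eq {f : ℝ → ℝ} {a : ℝ} (ha : 0 < a) (hf : Measurable f)
    (hnonneg : ∀ α, 0 ≤ f α) (hInt : IntegrableOn f (Ioi 0)) :
    ∫ α in Ioi 0, Qfun (√(a * α)) * f α =
      ∫ x in Ioi 0, gaussianPDFReal 0 1 x * ∫ α in Ioo 0 (x ^ 2 / a), f α := by
  set φ := gaussianPDFReal 0 1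
  have hφ : Measurable φ := measurable_gaussianPDFReal 0 1
  set E : ℝ × ℝ → ENNReal :=
    {p | √(a * p.1) < p.2}.indicator fun p => ENNReal.ofReal (φ p.2 * f p.1)
  have hE : Measurable E :=
    ((hφ.comp measurable_snd).mul (hf.comp measurable_fst)).ennreal_ofReal.indicator
      (measurableSet_lt (by fun_prop) measurable_snd)
  have inner_gauss : ∀ α, ∫⁻ x in Ioi 0, E (α, x) = ENNReal.ofReal (Qfun (√(a * α)) * f α) := by
    intro α
    have hE_α : (fun x => E (α, x)) =
        (Ioi √(a * α)).indicator fun x => ENNReal.ofReal (φ x * f α) := rfl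
    rw [hE_α, lintegral_indicator measurableSet_Ioi, Measure.restrict_restrict measurableSet_Ioi,
      Ioi_inter_Ioi, sup_eq_left.mpr (sqrt_nonneg _), Qfun_eq_setIntegral_gaussianPDFReal,
      ← integral_mul_const, ofReal_integral_eq_lintegral_ofReal]
    · exact (integrable_gaussianPDFReal 0 1).integrableOn.mul_const _
    · exact .of_forall fun x => mul_nonneg (gaussianPDFReal_nonneg 0 1 x) (hnonneg α)
  have inner_density : ∀ x ∈ Ioi (0 : ℝ), ∫⁻ α in Ioi 0, E (α, x) =
      ENNReal.ofReal (φ x * ∫ α in Ioo 0 (x ^ 2 / a), f α) := by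
    intro x hx
    have hE_x : (fun α => E (α, x)) =
        (Iio (x ^ 2 / a)).indicator fun α => ENNReal.ofReal (φ x * f α) := by
      ext α
      simp only [E, indicator, mem_ofPred_eq, mem_Iio, sqrt_lt' hx, lt_div_iff₀ ha, mul_comm α]
    rw [hE_x, lintegral_indicator measurableSet_Iio, Measure.restrict_restrict measurableSet_Iio,
      Iio_inter_Ioi, ← integral_const_mul, ofReal_integral_eq_lintegral_ofReal]
    · exact (hInt.mono_set Ioo_subset_Ioi_self).const_mul _
    · exact .of_forall fun α => mul_nonneg (gaussianPDFReal_nonneg 0 1 x) (hnonneg α)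
  rw [integral_eq_lintegral_of_nonneg_ae, integral_eq_lintegral_of_nonneg_ae]
  · congr 1
    calc ∫⁻ α in Ioi 0, ENNReal.ofReal (Qfun (√(a * α)) * f α)
        = ∫⁻ α in Ioi 0, ∫⁻ x in Ioi 0, E (α, x) := by simp only [inner_gauss]
      _ = ∫⁻ x in Ioi 0, ∫⁻ α in Ioi 0, E (α, x) :=
        lintegral_lintegral_swap hE.aemeasurable
      _ = _ := setLIntegral_congr_fun measurableSet_Ioi inner_density
  · exact .of_forall fun x => mul_nonneg (gaussianPDFReal_nonneg 0 1 x)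
      (setIntegral_nonneg measurableSet_Ioo fun α _ => hnonneg α)
  · exact (hφ.mul ((monotone_setIntegral_Ioo hnonneg hInt).measurable.comp
      (by fun_prop))).aestronglyMeasurable
  · exact .of_forall fun α => mul_nonneg (Qfun_nonneg _) (hnonneg α)
  · exact ((antitone_Qfun.measurable.comp (by fun_prop)).mul hf).aestronglyMeasurable

lemma setIntegral_Ioo_zero_rpow {t b : ℝ} (ht : -1 < t) (hb : 0 ≤ b) :
    ∫ α in Ioo 0 b, α ^ t = b ^ (t + 1) / (t + 1) := by
  rw [← integral_Ioc_eq_integral_Ioo, ← intervalIntegral.integral_of_le hb,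
    integral_rpow (.inl ht), zero_rpow (by linarith), sub_zero]

lemma abs_setIntegral_Ioo_sub_le {f : ℝ → ℝ} {t c ε b : ℝ} (ht : -1 < t) (hb : 0 < b)
    (hInt : IntegrableOn f (Ioo 0 b)) (hf : ∀ α ∈ Ioo 0 b, |f α - c * α ^ t| ≤ ε * α ^ t) :
    |(∫ α in Ioo 0 b, f α) - c * (b ^ (t + 1) / (t + 1))| ≤ ε * (b ^ (t + 1) / (t + 1)) := by
  have hpow : IntegrableOn (fun α => α ^ t) (Ioo 0 b) :=
    (intervalIntegral.integrableOn_Ioo_rpow_iff hb).mpr ht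
  rw [← setIntegral_Ioo_zero_rpow ht hb.le, ← integral_const_mul, ← integral_const_mul,
    ← integral_sub hInt (hpow.const_mul c)]
  exact (abs_integral_le_integral_abs).trans
    (setIntegral_mono_on (hInt.sub (hpow.const_mul c)).abs (hpow.const_mul ε) measurableSet_Ioo
      hf)

lemma tendsto_setIntegral_Ioo_div_rpow {f : ℝ → ℝ} {t c : ℝ} (ht : -1 < t)
    (hInt : IntegrableOn f (Ioi 0)) (hf : Tendsto (fun α => f α / α ^ t) (𝓝[>] 0) (𝓝 c)) :
    Tendsto (fun b => (∫ α in Ioo 0 b, f α) / b ^ (t + 1)) (𝓝[>] 0) (𝓝 (c / (t + 1))) := by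
  have ht1 : 0 < t + 1 := by linarith
  rw [Metric.tendsto_nhdsWithin_nhds] at hf ⊢
  intro ε hε
  obtain ⟨δ, hδ, hfδ⟩ := hf (ε * (t + 1) / 2) (by positivity)
  refine ⟨δ, hδ, fun b (hb : 0 < b) hbδ => ?_⟩
  have hbt : 0 < b ^ (t + 1) := rpow_pos_of_pos hb _
  have hclose : ∀ α ∈ Ioo 0 b, |f α - c * α ^ t| ≤ ε * (t + 1) / 2 * α ^ t := by
    rintro α ⟨hα, hαb⟩
    have hαt : 0 < α ^ t := rpow_pos_of_pos hα _
    have hαδ : dist α 0 < δ := by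
      rw [dist_zero_right, norm_of_nonneg hα.le]
      rw [dist_zero_right, norm_of_nonneg hb.le] at hbδ
      linarith
    have hratio := (hfδ hα hαδ).le
    rw [dist_eq] at hratio
    calc |f α - c * α ^ t| = |f α / α ^ t - c| * α ^ t := by
          rw [← abs_of_pos hαt, ← abs_mul, abs_of_pos hαt, sub_mul, div_mul_cancel₀ _ hαt.ne']
      _ ≤ ε * (t + 1) / 2 * α ^ t := mul_le_mul_of_nonneg_right hratio hαt.le
  have hintegral := abs_setIntegral_Ioo_sub_le ht hb (hInt.mono_set Ioo_subset_Ioi_self) hclose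
  have hsplit : (∫ α in Ioo 0 b, f α) / b ^ (t + 1) - c / (t + 1) =
      ((∫ α in Ioo 0 b, f α) - c * (b ^ (t + 1) / (t + 1))) / b ^ (t + 1) := by
    field_simp
  rw [dist_eq, hsplit, abs_div, abs_of_pos hbt, div_lt_iff₀ hbt]
  calc _ ≤ ε * (t + 1) / 2 * (b ^ (t + 1) / (t + 1)) := hintegral
    _ = ε / 2 * b ^ (t + 1) := by field_simp
    _ < ε * b ^ (t + 1) := by nlinarith

lemma exists_abs_setIntegral_Ioo_le_mul_rpow {f : ℝ → ℝ} {t c : ℝ} (ht : -1 < t)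
    (hnonneg : ∀ α, 0 ≤ f α) (hInt : IntegrableOn f (Ioi 0))
    (hf : Tendsto (fun α => f α / α ^ t) (𝓝[>] 0) (𝓝 c)) :
    ∃ C, ∀ b, 0 < b → |∫ α in Ioo 0 b, f α| ≤ C * b ^ (t + 1) := by
  have ht1 : 0 < t + 1 := by linarith
  obtain ⟨δ, hδ, hnear⟩ := mem_nhdsGT_iff_exists_Ioo_subset.mp
    ((tendsto_setIntegral_Ioo_div_rpow ht hInt hf).eventually (gt_mem_nhds (lt_add_one _)))
  set I := ∫ α in Ioi 0, f α
  have hδt : 0 < δ ^ (t + 1) := rpow_pos_of_pos hδ _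
  refine ⟨max (c / (t + 1) + 1) (I / δ ^ (t + 1)), fun b hb => ?_⟩
  have hbt : 0 < b ^ (t + 1) := rpow_pos_of_pos hb _
  rw [abs_of_nonneg (setIntegral_nonneg measurableSet_Ioo fun α _ => hnonneg α)]
  rcases lt_or_ge b δ with hbδ | hδb
  · have hratio : (∫ α in Ioo 0 b, f α) / b ^ (t + 1) < c / (t + 1) + 1 := hnear ⟨hb, hbδ⟩
    rw [div_lt_iff₀ hbt] at hratio
    exact hratio.le.trans (mul_le_mul_of_nonneg_right (le_max_left _ _) hbt.le)
  · have hI : 0 ≤ I := setIntegral_nonneg measurableSet_Ioi fun α _ => hnonneg α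
    calc ∫ α in Ioo 0 b, f α
        ≤ I := setIntegral_mono_set hInt (.of_forall hnonneg) Ioo_subset_Ioi_self.eventuallyLE
      _ = I / δ ^ (t + 1) * δ ^ (t + 1) := (div_mul_cancel₀ _ hδt.ne').symm
      _ ≤ I / δ ^ (t + 1) * b ^ (t + 1) := by gcongr; exact le_of_lt hδ
      _ ≤ _ := mul_le_mul_of_nonneg_right (le_max_right _ _) hbt.le

lemma tendsto_rpow_mul_setIntegral_mul_sq_div {w F : ℝ → ℝ} {r C L : ℝ} (hw : Measurable w)
    (hF : Measurable F) (hwr : IntegrableOn (fun x => w x * x ^ (2 * r)) (Ioi 0))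
    (hbound : ∀ b, 0 < b → |F b| ≤ C * b ^ r)
    (hlim : Tendsto (fun b => F b / b ^ r) (𝓝[>] 0) (𝓝 L)) :
    Tendsto (fun u => u ^ r * ∫ x in Ioi 0, w x * F (x ^ 2 / u)) atTop
      (𝓝 (L * ∫ x in Ioi 0, w x * x ^ (2 * r))) := by
  have hsq : ∀ x : ℝ, 0 < x → (x ^ 2) ^ r = x ^ (2 * r) := fun x hx => by
    rw [rpow_mul hx.le, rpow_two]
  have hscale : ∀ x u : ℝ, 0 < u → (x ^ 2 / u) ^ r = (x ^ 2) ^ r / u ^ r := fun x u hu =>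
    div_rpow (sq_nonneg x) hu.le r
  simp_rw [← integral_const_mul]
  refine tendsto_integral_filter_of_dominated_convergence (fun x => C * ‖w x * x ^ (2 * r)‖)
    ?_ ?_ (hwr.norm.const_mul C) ?_
  · exact .of_forall fun u => ((hw.mul (hF.comp (by fun_prop))).const_mul _).aestronglyMeasurable
  · filter_upwards [eventually_gt_atTop 0] with u hu
    refine (ae_restrict_iff' measurableSet_Ioi).mpr (.of_forall fun x (hx : 0 < x) => ?_)
    have hur : 0 < u ^ r := rpow_pos_of_pos hu r
    calc ‖u ^ r * (w x * F (x ^ 2 / u))‖ = |w x| * (u ^ r * |F (x ^ 2 / u)|) := by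
          rw [norm_mul, norm_mul, norm_of_nonneg hur.le, norm_eq_abs, norm_eq_abs]; ring
      _ ≤ |w x| * (u ^ r * (C * (x ^ 2 / u) ^ r)) := by
          gcongr; exact hbound _ (by positivity)
      _ = C * ‖w x * x ^ (2 * r)‖ := by
          rw [hscale x u hu, ← hsq x hx, norm_mul, norm_eq_abs, norm_of_nonneg (by positivity)]
          field_simp
  · refine (ae_restrict_iff' measurableSet_Ioi).mpr (.of_forall fun x (hx : 0 < x) => ?_)
    have hsq_div : Tendsto (fun u => x ^ 2 / u) atTop (𝓝[>] 0) :=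
      tendsto_nhdsWithin_iff.mpr ⟨tendsto_const_nhds.div_atTop tendsto_id,
        (eventually_gt_atTop 0).mono fun u (hu : 0 < u) => show 0 < x ^ 2 / u by positivity⟩
    have hpointwise := ((hlim.comp hsq_div).const_mul ((x ^ 2) ^ r)).const_mul (w x)
    rw [← hsq x hx, show L * (w x * (x ^ 2) ^ r) = w x * ((x ^ 2) ^ r * L) by ring]
    refine hpointwise.congr' ?_
    filter_upwards [eventually_gt_atTop 0] with u hu
    have hur : 0 < u ^ r := rpow_pos_of_pos hu r
    have hxr : 0 < (x ^ 2) ^ r := rpow_pos_of_pos (by positivity) r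
    simp only [Function.comp_apply, hscale x u hu]
    field_simp

theorem stmt13_general (t k c : ℝ) (ht : -1 < t) (hk : 0 < k)
    (f : ℝ → ℝ) (hmeas : Measurable f) (hnonneg : ∀ α, 0 ≤ f α)
    (hInt : MeasureTheory.IntegrableOn f (Set.Ioi 0))
    (hf : Filter.Tendsto (fun α => f α / α ^ t) (nhdsWithin 0 (Set.Ioi 0)) (nhds c)) :
    Filter.Tendsto
      (fun s => s ^ (t + 1) * ∫ α in Set.Ioi (0 : ℝ), Qfun (Real.sqrt (k * α * s)) * f α)
      Filter.atTop
      (nhds (2 ^ t * c * Real.Gamma (t + 3 / 2) /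
        (Real.sqrt Real.pi * (t + 1) * k ^ (t + 1)))) := by
  have ht2 : -1 < 2 * (t + 1) := by linarith
  obtain ⟨C, hC⟩ := exists_abs_setIntegral_Ioo_le_mul_rpow ht hnonneg hInt hf
  have hlim := (tendsto_rpow_mul_setIntegral_mul_sq_div (measurable_gaussianPDFReal 0 1)
    (monotone_setIntegral_Ioo hnonneg hInt).measurable
    (integrableOn_gaussianPDFReal_mul_rpow ht2) hC
    (tendsto_setIntegral_Ioo_div_rpow ht hInt hf)).comp (tendsto_id.const_mul_atTop hk)
  have hvalue : c / (t + 1) * (2 ^ (2 * (t + 1) / 2) * Gamma ((2 * (t + 1) + 1) / 2) / (2 * √π))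
      / k ^ (t + 1) = 2 ^ t * c * Gamma (t + 3 / 2) / (√π * (t + 1) * k ^ (t + 1)) := by
    rw [mul_div_cancel_left₀ _ two_ne_zero, show (2 * (t + 1) + 1) / 2 = t + 3 / 2 by ring,
      rpow_add_one two_ne_zero]
    have : 0 < √π := by positivity
    field_simp
  rw [setIntegral_gaussianPDFReal_mul_rpow ht2] at hlim
  rw [← hvalue]
  refine (hlim.div_const (k ^ (t + 1))).congr' ?_
  filter_upwards [eventually_gt_atTop 0] with s hs
  simp only [Function.comp_apply, id, mul_right_comm k, mul_rpow hk.le hs.le,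
    setIntegral_Qfun_sqrt_mul_eq (mul_pos hk hs) hmeas hnonneg hInt]
  rw [mul_assoc, mul_div_cancel_left₀ _ (rpow_pos_of_pos hk _).ne']

/-- Paper's Theorem 1: if the density `f` of the squared channel gain satisfies
`f(α) = c·α^t + o(α^t)` as `α → 0⁺`, then the average symbol error probability
`P_e(s) = ∫_0^∞ Q(√(kαs))·f(α) dα` satisfies
`lim_{s→∞} s^{t+1}·P_e(s) = 2^t·c·Γ(t+3/2)/(√π·(t+1)·k^{t+1})`,
i.e., the diversity gain is `t + 1`. -/
theorem stmt13 (t k c : ℝ) (ht : -1 < t) (hk : 0 < k) (hc : 0 < c)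
    (f : ℝ → ℝ) (hmeas : Measurable f) (hnonneg : ∀ α, 0 ≤ f α)
    (hInt : MeasureTheory.IntegrableOn f (Set.Ioi 0))
    (hprob : ∫ α in Set.Ioi (0 : ℝ), f α = 1)
    (hf : Filter.Tendsto (fun α => f α / α ^ t) (nhdsWithin 0 (Set.Ioi 0)) (nhds c)) :
    Filter.Tendsto
      (fun s => s ^ (t + 1) * ∫ α in Set.Ioi (0 : ℝ), Qfun (Real.sqrt (k * α * s)) * f α)
      Filter.atTop
      (nhds (2 ^ t * c * Real.Gamma (t + 3 / 2) /
        (Real.sqrt Real.pi * (t + 1) * k ^ (t + 1)))) :=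
  stmt13_general t k c ht hk f hmeas hnonneg hInt hf
end

section
/- Let θ = (1/2)·arctan(2). For all Gaussian integers z, w ∈ ℤ[i] ⊆ ℂ (complex numbers with integer real and imaginary parts) with (z, w) ≠ (0, 0), one has z·cosθ − w·sinθ ≠ 0. In particular, the 2 × 2 rotation matrix P by angle θ satisfies the full-diversity condition of the paper's Theorem 3: the first entry of P·Δx is nonzero for every nonzero difference vector Δx of vectors with entries in any QAM constellation. -/
/-!
With `θ = arctan 2 / 2`, the double-angle formula `tan 2θ = 2` gives `tan² θ + tan θ = 1`, so
`tan θ = (√5 - 1) / 2` is irrational. If `z cos θ = w sin θ` for Gaussian integers `z, w`, then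
comparing real and imaginary parts gives `a cos θ = b sin θ` for integers `a, b`; were `b ≠ 0`,
`tan θ = a / b` would be rational, and `b = 0` forces `a = 0` since `cos θ ≠ 0`.
-/

open Real

theorem Real.tan_half_arctan_two : tan ((1 / 2) * arctan 2) = (√5 - 1) / 2 := by
  set t := tan ((1 / 2) * arctan 2)
  have ht_pos : 0 < t := by
    apply tan_pos_of_pos_of_lt_pi_div_two
    · linarith [arctan_pos.mpr (two_pos : (0 : ℝ) < 2)]
    · linarith [arctan_lt_pi_div_two 2, arctan_pos.mpr (two_pos : (0 : ℝ) < 2)]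
  have h_double : 2 * t / (1 - t ^ 2) = 2 := by
    rw [← tan_two_mul, show 2 * ((1 / 2) * arctan 2) = arctan 2 by ring, tan_arctan]
  have h_denom : 1 - t ^ 2 ≠ 0 := by
    intro h
    rw [h, div_zero] at h_double
    norm_num at h_double
  have h_quadratic : t ^ 2 + t = 1 := by
    field_simp at h_double
    linarith
  have h_sqrt : √5 = 2 * t + 1 := by
    rw [show (5 : ℝ) = (2 * t + 1) ^ 2 by linear_combination -4 * h_quadratic]
    exact sqrt_sq (by linarith)
  linarith

theorem Real.irrational_tan_half_arctan_two : Irrational (tan ((1 / 2) * arctan 2)) := by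
  rw [tan_half_arctan_two]
  have h5 : Irrational √5 := by exact_mod_cast Nat.prime_five.irrational_sqrt
  exact_mod_cast (h5.sub_intCast 1).div_intCast two_ne_zero

theorem Irrational.eq_zero_of_mul_eq_mul {s c : ℝ} (h : Irrational (s / c)) {a b : ℚ}
    (hab : a * c = b * s) : a = 0 ∧ b = 0 := by
  have hc : c ≠ 0 := by
    -- `s / 0 = 0` is rational
    rintro rfl
    exact h ⟨0, by simp⟩
  by_cases hb : b = 0
  · subst hb
    simpa [hc] using hab
  · refine absurd ⟨a / b, ?_⟩ h
    push_cast
    rw [div_eq_div_iff (by exact_mod_cast hb) hc]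
    linear_combination hab

theorem Irrational.gaussianInt_eq_zero_of_mul_sub_mul_eq_zero {s c : ℝ}
    (h : Irrational (s / c)) {a b a' b' : ℤ}
    (hzw : ((a : ℂ) + b * Complex.I) * c - ((a' : ℂ) + b' * Complex.I) * s = 0) :
    a = 0 ∧ b = 0 ∧ a' = 0 ∧ b' = 0 := by
  rw [sub_eq_zero, Complex.ext_iff] at hzw
  simp only [Complex.add_re, Complex.add_im, Complex.mul_re, Complex.mul_im,
    Complex.intCast_re, Complex.intCast_im, Complex.ofReal_re, Complex.ofReal_im,
    Complex.I_re, Complex.I_im] at hzw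
  obtain ⟨hre, him⟩ := hzw
  obtain ⟨ha, ha'⟩ := h.eq_zero_of_mul_eq_mul (a := a) (b := a') (by push_cast; linarith)
  obtain ⟨hb, hb'⟩ := h.eq_zero_of_mul_eq_mul (a := b) (b := b') (by push_cast; linarith)
  exact ⟨by exact_mod_cast ha, by exact_mod_cast hb, by exact_mod_cast ha',
    by exact_mod_cast hb'⟩

/-- Full-diversity of the lattice precoder by angle `θ = (1/2)·arctan 2`: for
all Gaussian integers `z, w`, not both zero, `z·cosθ − w·sinθ ≠ 0`. -/
theorem stmt15 (z w : ℂ)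
    (hz : ∃ a b : ℤ, z = (a : ℂ) + (b : ℂ) * Complex.I)
    (hw : ∃ a b : ℤ, w = (a : ℂ) + (b : ℂ) * Complex.I)
    (hzw : ¬(z = 0 ∧ w = 0)) :
    z * (Real.cos ((1 / 2) * Real.arctan 2) : ℂ) -
      w * (Real.sin ((1 / 2) * Real.arctan 2) : ℂ) ≠ 0 := by
  obtain ⟨a, b, rfl⟩ := hz
  obtain ⟨a', b', rfl⟩ := hw
  intro h
  have h_irr := irrational_tan_half_arctan_two
  rw [tan_eq_sin_div_cos] at h_irr
  obtain ⟨rfl, rfl, rfl, rfl⟩ := h_irr.gaussianInt_eq_zero_of_mul_sub_mul_eq_zero h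
  simp at hzw
end

section
/- Let γ, ψ ∈ (0, π/2) and define ε(p, q, θ, ψ) = cos²γ·cos²ψ·(p·cosθ − q·sinθ)² + sin²γ·sin²ψ·(q·cosθ + p·sinθ)². Then the three values ε(0, 1, π/4, ψ), ε(1, 1, π/4, ψ), ε(1, 0, π/4, ψ) are all equal if and only if tanγ·tanψ = 1/√3. (This verifies the 4-QAM row of the paper's Table I in the regime arctan(1/√7) ≤ γ ≤ π/4: θ* = π/4, tanγ·tanψ* = 1/√3, with the minimizing pairs (p,q) = (0,1), (1,1), (1,0).) -/
/-- The 4-QAM row of the paper's Table I for `arctan(1/√7) ≤ γ ≤ π/4`: with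
`θ* = π/4`, the three values `ε(0,1,π/4,ψ)`, `ε(1,1,π/4,ψ)`, `ε(1,0,π/4,ψ)` are
all equal iff `tanγ·tanψ = 1/√3`. -/
theorem stmt17 (γ ψ : ℝ) (hγ : γ ∈ Set.Ioo 0 (Real.pi / 2))
    (hψ : ψ ∈ Set.Ioo 0 (Real.pi / 2)) :
    (eps γ 0 1 (Real.pi / 4) ψ = eps γ 1 1 (Real.pi / 4) ψ ∧
      eps γ 1 1 (Real.pi / 4) ψ = eps γ 1 0 (Real.pi / 4) ψ) ↔
    Real.tan γ * Real.tan ψ = 1 / Real.sqrt 3 := by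
  obtain ⟨hγ0, hγ1⟩ := hγ
  obtain ⟨hψ0, hψ1⟩ := hψ
  have hcγ : 0 < Real.cos γ := Real.cos_pos_of_mem_Ioo ⟨by linarith [Real.pi_pos], hγ1⟩
  have hsγ : 0 < Real.sin γ := Real.sin_pos_of_pos_of_lt_pi hγ0 (by linarith [Real.pi_pos])
  have hcψ : 0 < Real.cos ψ := Real.cos_pos_of_mem_Ioo ⟨by linarith [Real.pi_pos], hψ1⟩
  have hsψ : 0 < Real.sin ψ := Real.sin_pos_of_pos_of_lt_pi hψ0 (by linarith [Real.pi_pos])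
  have h3 : (0:ℝ) < Real.sqrt 3 := Real.sqrt_pos.mpr (by norm_num)
  have h3sq : Real.sqrt 3 ^ 2 = 3 := Real.sq_sqrt (by norm_num)
  have h2 : Real.sqrt 2 ^ 2 = 2 := Real.sq_sqrt (by norm_num)
  set C := Real.cos γ ^ 2 * Real.cos ψ ^ 2 with hC
  set S := Real.sin γ ^ 2 * Real.sin ψ ^ 2 with hS
  have e01 : eps γ 0 1 (Real.pi / 4) ψ = C / 2 + S / 2 := by
    simp only [eps, Real.cos_pi_div_four, Real.sin_pi_div_four, ← hC, ← hS]
    linear_combination ((C + S) / 4) * h2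
  have e11 : eps γ 1 1 (Real.pi / 4) ψ = 2 * S := by
    simp only [eps, Real.cos_pi_div_four, Real.sin_pi_div_four, ← hC, ← hS]
    linear_combination S * h2
  have e10 : eps γ 1 0 (Real.pi / 4) ψ = C / 2 + S / 2 := by
    simp only [eps, Real.cos_pi_div_four, Real.sin_pi_div_four, ← hC, ← hS]
    linear_combination ((C + S) / 4) * h2
  rw [e01, e11, e10, Real.tan_eq_sin_div_cos, Real.tan_eq_sin_div_cos]
  constructor
  · rintro ⟨h1, -⟩
    -- C = 3 S
    have hcs : C = 3 * S := by linarith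
    have hzero : (Real.cos γ * Real.cos ψ - Real.sqrt 3 * (Real.sin γ * Real.sin ψ)) *
        (Real.cos γ * Real.cos ψ + Real.sqrt 3 * (Real.sin γ * Real.sin ψ)) = 0 := by
      rw [hC, hS] at hcs
      linear_combination hcs - (Real.sin γ * Real.sin ψ) ^ 2 * h3sq
    rcases mul_eq_zero.mp hzero with h | h
    · have heq : Real.cos γ * Real.cos ψ = Real.sqrt 3 * (Real.sin γ * Real.sin ψ) := by
        linarith
      field_simp
      linear_combination -heq
    · nlinarith [mul_pos hcγ hcψ, mul_pos (mul_pos h3 hsγ) hsψ]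
  · intro h
    rw [div_mul_div_comm, div_eq_div_iff (by positivity) h3.ne'] at h
    have hcs : C = 3 * S := by
      rw [hC, hS]
      linear_combination (Real.cos γ * Real.cos ψ + Real.sqrt 3 * (Real.sin γ * Real.sin ψ)) * h.symm + (Real.sin γ * Real.sin ψ) ^ 2 * h3sq
    constructor <;> linarith
end
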